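/- Let g : ℝ → ℝ be defined by g(y) = sin(2y)/(2y) for y ≠ 0 and g(0) = 1. Then g is differentiable on ℝ and |g'(y)| ≤ (4/3)|y| for all y ∈ ℝ. -/

import Mathlib

/-- `g(y) = sin(2y)/(2y)` for `y ≠ 0`, `g(0) = 1`. -/
noncomputable def gfun (y : ℝ) : ℝ := if y = 0 then 1 else Real.sin (2 * y) / (2 * y)

/-! `sinc x = ∫₀¹ cos (t x) dt`, so differentiating under the integral sign gives
`sinc' x = -∫₀¹ t sin (t x) dt`, and `|t sin (t x)| ≤ t² |x|` bounds it by `|x| / 3`.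
Since `g y = sinc (2 y)`, the chain rule gives `|g' y| ≤ 2 · |2 y| / 3`. -/

open Real intervalIntegral

namespace Real

theorem sinc_eq_integral_cos (x : ℝ) : sinc x = ∫ t in (0 : ℝ)..1, cos (t * x) := by
  rcases eq_or_ne x 0 with rfl | hx
  · simp
  · rw [sinc_of_ne_zero hx, integral_comp_mul_right cos hx, integral_cos]
    simp [div_eq_inv_mul]

theorem hasDerivAt_sinc (x : ℝ) :
    HasDerivAt sinc (-∫ t in (0 : ℝ)..1, t * sin (t * x)) x := by
  have hderiv (t y : ℝ) : HasDerivAt (fun y => cos (t * y)) (-(t * sin (t * y))) y := by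
    simpa [mul_comm] using ((hasDerivAt_id y).const_mul t).cos
  have hbound (t y : ℝ) : ‖-(t * sin (t * y))‖ ≤ |t| := by
    simpa [abs_mul] using mul_le_of_le_one_right (abs_nonneg t) (abs_sin_le_one (t * y))
  have key := intervalIntegral.hasDerivAt_integral_of_dominated_loc_of_deriv_le
    (μ := MeasureTheory.volume) (a := 0) (b := 1) (x₀ := x) (bound := fun t => |t|)
    Filter.univ_mem
    (.of_forall fun y => (by fun_prop : Continuous fun t => cos (t * y)).aestronglyMeasurable)
    ((by fun_prop : Continuous fun t => cos (t * x)).intervalIntegrable _ _)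
    (by fun_prop : Continuous fun t => -(t * sin (t * x))).aestronglyMeasurable
    (.of_forall fun t _ y _ => hbound t y) (continuous_abs.intervalIntegrable _ _)
    (.of_forall fun t _ y _ => hderiv t y)
  rw [← integral_neg, funext sinc_eq_integral_cos]
  exact key.2

theorem differentiable_sinc : Differentiable ℝ sinc :=
  fun x => (hasDerivAt_sinc x).differentiableAt

theorem abs_deriv_sinc_le (x : ℝ) : |deriv sinc x| ≤ |x| / 3 := by
  have hpoint : ∀ t ∈ Set.Ioc (0 : ℝ) 1, ‖t * sin (t * x)‖ ≤ |x| * t ^ 2 := fun t ht => by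
    have h := abs_sin_le_abs (x := t * x)
    rw [abs_mul, abs_of_pos ht.1] at h
    rw [norm_mul, norm_eq_abs, norm_eq_abs, abs_of_pos ht.1]
    nlinarith [ht.1]
  rw [(hasDerivAt_sinc x).deriv, abs_neg, ← norm_eq_abs]
  calc ‖∫ t in (0 : ℝ)..1, t * sin (t * x)‖ ≤ ∫ t in (0 : ℝ)..1, |x| * t ^ 2 :=
        norm_integral_le_of_norm_le zero_le_one (.of_forall hpoint)
          ((by fun_prop : Continuous fun t : ℝ => |x| * t ^ 2).intervalIntegrable _ _)
    _ = |x| / 3 := by rw [integral_const_mul, integral_pow]; ring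

end Real

theorem gfun_eq_sinc : gfun = fun y => sinc (2 * y) := by
  ext y
  simp [gfun, sinc]

/-- `g` is differentiable on `ℝ` and `|g'(y)| ≤ (4/3)|y|` for all `y`. -/
theorem stmt10 : Differentiable ℝ gfun ∧ ∀ y : ℝ, |deriv gfun y| ≤ 4 / 3 * |y| := by
  rw [gfun_eq_sinc]
  refine ⟨differentiable_sinc.comp (differentiable_id.const_mul 2), fun y => ?_⟩
  rw [deriv_comp_mul_left, smul_eq_mul, abs_mul, abs_two]
  calc 2 * |deriv sinc (2 * y)| ≤ 2 * (|2 * y| / 3) := by gcongr; exact abs_deriv_sinc_le _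
    _ = 4 / 3 * |y| := by rw [abs_mul, abs_two]; ring
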